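/- arXiv:2411.15579 — 6 statements merged into one kernel-verified Lean document; each statement's English description precedes it below -/
import Mathlib

section
/- Let p ≥ 1 be real and let G = G[V₁, V₂] be a bipartite graph with parts V₁ and V₂ where |V₂| ≥ 2. Then there exists a nonempty subset U ⊆ V₁ such that the number of edges between U and V₂ is at least (|U|^(1-1/p) / 2) · (Σ_{v∈V₁} d(v)^p / ⌈log₂ |V₂|⌉)^(1/p). -/
/-!
Sort the vertices of positive degree into the `⌈log₂ |V₂|⌉` dyadic classes
`2^i ≤ d(v) ≤ 2^(i+1)`; by pigeonhole one class `U` carries at least a `1/⌈log₂ |V₂|⌉` share of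
`∑ d(v)^p`. Within `U` all degrees agree up to a factor `2`, so with `2^i` the lower end of the
class, `(∑_U d^p)^(1/p) ≤ |U|^(1/p) 2^(i+1)` while `e(U, V₂) ≥ |U| 2^i`.
-/

open Finset

/-- The index `i` of the dyadic class `2^i ≤ n ≤ 2^(i+1)` of a positive integer `n`; the shift
by one puts `n = 2^L` into class `L - 1` rather than `L`. -/
def dyadicIndex (n : ℕ) : ℕ := Nat.log 2 (n - 1)

lemma two_pow_dyadicIndex_le {n : ℕ} (hn : n ≠ 0) : 2 ^ dyadicIndex n ≤ n := by
  rcases eq_or_ne (n - 1) 0 with h | h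
  · simp [dyadicIndex, h, Nat.one_le_iff_ne_zero.mpr hn]
  · exact (Nat.pow_log_le_self 2 h).trans (Nat.sub_le n 1)

lemma le_two_pow_dyadicIndex_succ (n : ℕ) : n ≤ 2 ^ (dyadicIndex n + 1) := by
  have := Nat.lt_pow_succ_log_self one_lt_two (n - 1)
  rw [dyadicIndex]
  omega

lemma dyadicIndex_lt {n L : ℕ} (hL : L ≠ 0) (hn : n ≤ 2 ^ L) : dyadicIndex n < L :=
  Nat.log_lt_of_lt_pow' hL (by have := Nat.one_le_two_pow (n := L); omega)

theorem exists_dyadic_class_le_sum {ι : Type*} [Fintype ι] {d : ι → ℕ} {w : ι → ℝ} {L : ℕ}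
    (hL : L ≠ 0) (hd : ∀ v, d v ≤ 2 ^ L) (hw : ∀ v, d v = 0 → w v = 0) :
    ∃ (i : ℕ) (U : Finset ι), (∀ v ∈ U, 2 ^ i ≤ d v ∧ d v ≤ 2 ^ (i + 1)) ∧
      (∑ v, w v) / L ≤ ∑ v ∈ U, w v := by
  classical
  have hsupp : ∑ v with d v ≠ 0, w v = ∑ v, w v :=
    sum_filter_of_ne fun v _ hv => mt (hw v) hv
  obtain ⟨i, -, hi⟩ := exists_le_sum_fiber_of_maps_to_of_nsmul_le_sum
    (s := {v | d v ≠ 0}) (t := range L) (f := fun v => dyadicIndex (d v)) (w := w)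
    (b := (∑ v, w v) / L) (fun v _ => mem_range.mpr (dyadicIndex_lt hL (hd v)))
    (nonempty_range_iff.mpr hL)
    (by rw [card_range, nsmul_eq_mul, mul_div_cancel₀ _ (Nat.cast_ne_zero.mpr hL), hsupp])
  refine ⟨i, _, fun v hv => ?_, hi⟩
  simp only [mem_filter, mem_univ, true_and] at hv
  obtain ⟨hv, rfl⟩ := hv
  exact ⟨two_pow_dyadicIndex_le hv, le_two_pow_dyadicIndex_succ _⟩

theorem card_rpow_mul_rpow_sum_le_sum {ι : Type*} {U : Finset ι} {d : ι → ℝ} {x c p : ℝ}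
    (hp : 0 < p) (hU : U.Nonempty) (hx : 0 ≤ x) (hc : 0 < c)
    (hd : ∀ v ∈ U, x ≤ d v ∧ d v ≤ c * x) :
    (#U : ℝ) ^ (1 - 1 / p) / c * (∑ v ∈ U, d v ^ p) ^ (1 / p) ≤ ∑ v ∈ U, d v := by
  have hU₀ : (0 : ℝ) < #U := Nat.cast_pos.mpr hU.card_pos
  have hsum_pow : ∑ v ∈ U, d v ^ p ≤ #U * (c * x) ^ p := by
    simpa using sum_le_card_nsmul U (d · ^ p) _ fun v hv =>
      Real.rpow_le_rpow (hx.trans (hd v hv).1) (hd v hv).2 hp.le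
  have hroot : (∑ v ∈ U, d v ^ p) ^ (1 / p) ≤ (#U : ℝ) ^ (1 / p) * (c * x) := by
    calc (∑ v ∈ U, d v ^ p) ^ (1 / p) ≤ ((#U : ℝ) * (c * x) ^ p) ^ (1 / p) :=
          Real.rpow_le_rpow (sum_nonneg fun v hv => Real.rpow_nonneg (hx.trans (hd v hv).1) p)
            hsum_pow (by positivity)
      _ = (#U : ℝ) ^ (1 / p) * (c * x) := by
          rw [Real.mul_rpow hU₀.le (by positivity), one_div,
            Real.rpow_rpow_inv (by positivity) hp.ne']
  calc (#U : ℝ) ^ (1 - 1 / p) / c * (∑ v ∈ U, d v ^ p) ^ (1 / p)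
      ≤ (#U : ℝ) ^ (1 - 1 / p) / c * ((#U : ℝ) ^ (1 / p) * (c * x)) := by gcongr
    _ = (#U : ℝ) ^ (1 - 1 / p) * (#U : ℝ) ^ (1 / p) * x := by field_simp
    _ = #U * x := by rw [← Real.rpow_add hU₀, sub_add_cancel, Real.rpow_one]
    _ ≤ ∑ v ∈ U, d v := by simpa using card_nsmul_le_sum U d x fun v hv => (hd v hv).1

/-- Dyadic pigeonhole: for a bipartite graph `G[V₁,V₂]` (given by its neighborhood
function `N : V₁ → Finset V₂`) with `|V₂| ≥ 2` and `p ≥ 1`, there is a nonempty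
`U ⊆ V₁` with
`e(U,V₂) ≥ (|U|^(1-1/p)/2) · (∑_{v∈V₁} d(v)^p / ⌈log₂ |V₂|⌉)^(1/p)`. -/
theorem stmt_8 {A B : Type*} [Fintype A] [Fintype B] [Nonempty A]
    (N : A → Finset B) (p : ℝ) (hp : 1 ≤ p) (hB : 2 ≤ Fintype.card B) :
    ∃ U : Finset A, U.Nonempty ∧
      (∑ v ∈ U, ((N v).card : ℝ)) ≥
        ((U.card : ℝ) ^ (1 - 1 / p) / 2) *
          ((∑ v, ((N v).card : ℝ) ^ p) /
            ((⌈Real.logb 2 (Fintype.card B)⌉ : ℤ) : ℝ)) ^ (1 / p) := by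
  have hp₀ : 0 < p := one_pos.trans_le hp
  have hceil : ⌈Real.logb 2 (Fintype.card B)⌉ = Nat.clog 2 (Fintype.card B) := by
    exact_mod_cast Real.ceil_logb_natCast (b := 2) (Nat.cast_nonneg _)
  have hL : Nat.clog 2 (Fintype.card B) ≠ 0 := (Nat.clog_pos one_lt_two hB).ne'
  have hdeg (v : A) : (N v).card ≤ 2 ^ Nat.clog 2 (Fintype.card B) :=
    (card_le_univ _).trans (Nat.le_pow_clog one_lt_two _)
  rw [hceil, Int.cast_natCast]
  generalize Nat.clog 2 (Fintype.card B) = L at hL hdeg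
  generalize hS_def : ∑ v, ((N v).card : ℝ) ^ p = S
  rcases eq_or_ne S 0 with hS | hS
  · obtain ⟨a⟩ := ‹Nonempty A›
    refine ⟨{a}, singleton_nonempty a, ?_⟩
    rw [hS, zero_div, Real.zero_rpow (by positivity), mul_zero, ge_iff_le]
    positivity
  obtain ⟨i, U, hU, hSU⟩ := exists_dyadic_class_le_sum (w := fun v => ((N v).card : ℝ) ^ p)
    hL hdeg fun v hv => by simp [hv, hp₀.ne']
  rw [hS_def] at hSU
  have hS₀ : 0 < S := (hS_def ▸ sum_nonneg fun v _ => by positivity).lt_of_ne' hS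
  have hL₀ : (0 : ℝ) < L := Nat.cast_pos.mpr (Nat.pos_of_ne_zero hL)
  have hU₀ : U.Nonempty := nonempty_of_sum_ne_zero ((div_pos hS₀ hL₀).trans_le hSU).ne'
  refine ⟨U, hU₀, ?_⟩
  calc (#U : ℝ) ^ (1 - 1 / p) / 2 * (S / L) ^ (1 / p)
      ≤ (#U : ℝ) ^ (1 - 1 / p) / 2 * (∑ v ∈ U, ((N v).card : ℝ) ^ p) ^ (1 / p) := by
        have hSL : 0 ≤ S / L := div_nonneg hS₀.le hL₀.le
        gcongr
    _ ≤ ∑ v ∈ U, ((N v).card : ℝ) :=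
        card_rpow_mul_rpow_sum_le_sum (x := 2 ^ i) hp₀ hU₀ (by positivity) two_pos fun v hv => by
          rw [← pow_succ']
          exact_mod_cast hU v hv
end

section
/- Every graph G satisfies W₄(G) ≥ (‖G‖_{3/2})² / |V(G)|, where W₄(G) = Σ_{uv∈E(G)} 2·d(u)·d(v) counts walks of length 3 (equivalently, Σ over ordered edges (u,v) of d(u)d(v)) and ‖G‖_{3/2} = Σ_v d(v)^{3/2}. -/
/-!
Counting a walk `v₀v₁v₂v₃` by its middle dart `(v₁, v₂)` gives `W₄(G) = ∑ d(a) d(b)` over the darts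
`(a, b)`, and `‖G‖_{3/2} = ∑_v d(v) √d(v) = ∑ √d(a)`. Cauchy–Schwarz with the weights `1 / d(b)`
gives `‖G‖_{3/2}² ≤ W₄(G) · ∑ 1 / d(b)`, and the last sum is the number of non-isolated vertices,
at most `|V(G)|`.
-/

open Finset

theorem Real.rpow_three_halves {x : ℝ} (hx : 0 ≤ x) : x ^ ((3 : ℝ) / 2) = x * √x := by
  rw [Real.sqrt_eq_rpow, ← Real.rpow_one_add' hx (by norm_num)]
  norm_num

namespace SimpleGraph

variable {V : Type*} [Fintype V] (G : SimpleGraph V) [DecidableRel G.Adj]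

theorem sum_dart_fst {M : Type*} [AddCommMonoid M] (f : V → M) :
    ∑ d : G.Dart, f d.fst = ∑ v, G.degree v • f v := by
  classical
  rw [← sum_fiberwise univ (fun d : G.Dart => d.fst)]
  refine sum_congr rfl fun v _ => ?_
  rw [sum_congr rfl fun d hd => by rw [(mem_filter.1 hd).2], sum_const]
  convert congrArg (· • f v) (G.dart_fst_fiber_card_eq_degree v)

theorem sum_dart_snd {M : Type*} [AddCommMonoid M] (f : V → M) :
    ∑ d : G.Dart, f d.snd = ∑ v, G.degree v • f v := by
  rw [← sum_dart_fst]
  exact Equiv.sum_comp (Dart.symm_involutive.toPerm _) fun d : G.Dart => f d.fst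

theorem sum_dart_inv_degree_snd_le_card :
    ∑ d : G.Dart, (G.degree d.snd : ℝ)⁻¹ ≤ Fintype.card V := by
  rw [sum_dart_snd G fun v => (G.degree v : ℝ)⁻¹, ← card_univ, card_eq_sum_ones, Nat.cast_sum,
    Nat.cast_one]
  refine sum_le_sum fun v _ => ?_
  rw [nsmul_eq_mul]
  exact mul_inv_le_one

theorem sum_degree_rpow_three_halves_eq_sum_dart :
    ∑ v, (G.degree v : ℝ) ^ ((3 : ℝ) / 2) = ∑ d : G.Dart, √(G.degree d.fst) := by
  rw [sum_dart_fst G fun v => √(G.degree v)]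
  simp only [Real.rpow_three_halves (Nat.cast_nonneg _), nsmul_eq_mul]

def fourVertexWalkEquivSigmaDart :
    {w : Fin 4 → V // ∀ i : Fin 3, G.Adj (w i.castSucc) (w i.succ)} ≃
      Σ d : G.Dart, G.neighborSet d.fst × G.neighborSet d.snd where
  toFun w := ⟨⟨(w.1 1, w.1 2), w.2 1⟩, ⟨w.1 0, (w.2 0).symm⟩, ⟨w.1 3, w.2 2⟩⟩
  invFun x := ⟨![x.2.1, x.1.fst, x.1.snd, x.2.2], by
    intro i
    fin_cases i
    exacts [x.2.1.2.symm, x.1.adj, x.2.2.2]⟩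
  left_inv w := by
    ext i
    fin_cases i <;> rfl
  right_inv x := rfl

theorem card_fourVertexWalks_eq_sum_dart :
    Fintype.card {w : Fin 4 → V // ∀ i : Fin 3, G.Adj (w i.castSucc) (w i.succ)} =
      ∑ d : G.Dart, G.degree d.fst * G.degree d.snd := by
  simp only [Fintype.card_congr G.fourVertexWalkEquivSigmaDart, Fintype.card_sigma,
    Fintype.card_prod, card_neighborSet_eq_degree]

end SimpleGraph

open SimpleGraph in
theorem stmt_9_general {V : Type*} [Fintype V] (G : SimpleGraph V)
    [DecidableRel G.Adj] :
    ((Fintype.card {w : Fin 4 → V // ∀ i : Fin 3, G.Adj (w i.castSucc) (w i.succ)}) : ℝ) ≥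
      (∑ v, (G.degree v : ℝ) ^ ((3 : ℝ) / 2)) ^ 2 / (Fintype.card V : ℝ) := by
  rw [ge_iff_le, card_fourVertexWalks_eq_sum_dart, sum_degree_rpow_three_halves_eq_sum_dart]
  push_cast
  refine div_le_of_le_mul₀ (Nat.cast_nonneg _) (by positivity) ?_
  have hsnd : ∀ d : G.Dart, (0 : ℝ) < G.degree d.snd := fun d =>
    Nat.cast_pos.2 (G.degree_pos_iff_exists_adj _ |>.2 ⟨_, d.adj.symm⟩)
  calc (∑ d : G.Dart, √(G.degree d.fst : ℝ)) ^ 2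
      ≤ (∑ d : G.Dart, (G.degree d.fst : ℝ) * G.degree d.snd) *
          ∑ d : G.Dart, (G.degree d.snd : ℝ)⁻¹ := by
        refine sum_sq_le_sum_mul_sum_of_sq_le_mul _ (fun _ _ => by positivity)
          (fun _ _ => by positivity) fun d _ => ?_
        rw [Real.sq_sqrt (Nat.cast_nonneg _), mul_inv_cancel_right₀ (hsnd d).ne']
    _ ≤ (∑ d : G.Dart, (G.degree d.fst : ℝ) * G.degree d.snd) * Fintype.card V := by
        gcongr
        exact G.sum_dart_inv_degree_snd_le_card

/-- `W₄(G) ≥ ‖G‖_{3/2}² / |V(G)|`, where `W₄(G)` is the number of walks with `4`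
vertices and `‖G‖_{3/2} = ∑_v d(v)^{3/2}`. -/
theorem stmt_9 {V : Type*} [Fintype V] [DecidableEq V] (G : SimpleGraph V)
    [DecidableRel G.Adj] :
    ((Fintype.card {w : Fin 4 → V // ∀ i : Fin 3, G.Adj (w i.castSucc) (w i.succ)}) : ℝ) ≥
      (∑ v, (G.degree v : ℝ) ^ ((3 : ℝ) / 2)) ^ 2 / (Fintype.card V : ℝ) :=
  stmt_9_general G
end

section
/- Let F be a family of graphs. Suppose ex(n, F) ≤ C·n^{1+α} for all n ≥ N₀, where C > 0 and α ∈ (0,1). Then for all n ≥ m ≥ max(N₀, some constant), every F-free bipartite graph G with parts A of size m and B of size n satisfies |E(G)| ≤ 2^{2+α}·C·m^α·n. (Semibipartite Turán bound derived from the ordinary Turán bound by random sampling.) -/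
/-!
Instead of sampling a random `m`-subset of the second part `B`, cover `B` by `⌈n/m⌉` blocks of
`m` consecutive vertices; since `m ≤ n` there are at most `2n/m` of them. The first part together
with one block spans an `F`-free graph on `2m` vertices, hence carries at most `C (2m)^{1+α}`
edges, and every edge of `G` lies in some block. Summing gives
`(2n/m) · C (2m)^{1+α} = 2^{2+α} C m^α n`.
-/

/-- `F` is contained in `G` as a subgraph: there is an injective map preserving adjacency. -/
def ContainsCopy {α β : Type*} (F : SimpleGraph α) (G : SimpleGraph β) : Prop :=
  ∃ f : α ↪ β, ∀ a b, F.Adj a b → G.Adj (f a) (f b)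

lemma ContainsCopy.of_comap {α V W : Type*} {F : SimpleGraph α} {G : SimpleGraph V} (f : W ↪ V)
    (h : ContainsCopy F (G.comap f)) : ContainsCopy F G :=
  let ⟨e, he⟩ := h
  ⟨e.trans f, he⟩

namespace SimpleGraph

variable {V W : Type*} {G : SimpleGraph V}

lemma ncard_edgeSet_map (f : W ↪ V) (H : SimpleGraph W) :
    (H.map f).edgeSet.ncard = H.edgeSet.ncard := by
  rw [edgeSet_map, Set.ncard_image_of_injective _ f.sym2Map.injective]

lemma ncard_edgeSet_le_sum_comap [Finite V] {ι : Type*} (s : Finset ι) (f : ι → (W ↪ V))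
    (hcover : ∀ x y, G.Adj x y → ∃ j ∈ s, x ∈ Set.range (f j) ∧ y ∈ Set.range (f j)) :
    G.edgeSet.ncard ≤ ∑ j ∈ s, (G.comap (f j)).edgeSet.ncard := by
  have hsub : G.edgeSet ⊆ ⋃ j ∈ s, ((G.comap (f j)).map (f j)).edgeSet := by
    intro e
    refine Sym2.ind (fun x y hxy => ?_) e
    obtain ⟨j, hj, ⟨u, rfl⟩, ⟨v, rfl⟩⟩ := hcover x y hxy
    exact Set.mem_biUnion hj (map_adj_apply.mpr hxy)
  calc G.edgeSet.ncard
      ≤ (⋃ j ∈ s, ((G.comap (f j)).map (f j)).edgeSet).ncard := Set.ncard_le_ncard hsub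
    _ ≤ ∑ j ∈ s, ((G.comap (f j)).map (f j)).edgeSet.ncard := s.set_ncard_biUnion_le _
    _ = ∑ j ∈ s, (G.comap (f j)).edgeSet.ncard := by
      simp only [ncard_edgeSet_map]

end SimpleGraph

section BipartiteWindow

variable {m n : ℕ}

/-- The first part together with the `j`-th block of `m` consecutive vertices of the second part;
the last blocks are moved left to stay inside `Fin n`, so they may overlap. -/
def bipartiteWindow (hmn : m ≤ n) (j : ℕ) : Fin (m + m) ↪ Fin m ⊕ Fin n :=
  finSumFinEquiv.symm.toEmbedding.trans <| Function.Embedding.sumMap (.refl _) <|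
    (Fin.natAddEmb (min (j * m) (n - m))).trans (Fin.castLEEmb (by omega))

lemma inl_mem_range_bipartiteWindow (hmn : m ≤ n) (j : ℕ) (a : Fin m) :
    Sum.inl a ∈ Set.range (bipartiteWindow hmn j) :=
  ⟨Fin.castAdd m a, by simp [bipartiteWindow]⟩

lemma inr_mem_range_bipartiteWindow (hm : 0 < m) (hmn : m ≤ n) (b : Fin n) :
    Sum.inr b ∈ Set.range (bipartiteWindow hmn (b / m : ℕ)) := by
  have hle := Nat.div_mul_le_self b m
  have hlt := Nat.lt_div_mul_add (a := b) hm
  have hb : (b : ℕ) - min ((b : ℕ) / m * m) (n - m) < m := by omega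
  refine ⟨Fin.natAdd m ⟨_, hb⟩, ?_⟩
  simp only [bipartiteWindow, Function.Embedding.trans_apply, Equiv.coe_toEmbedding,
    finSumFinEquiv_symm_apply_natAdd]
  simp only [Function.Embedding.coe_sumMap, Sum.map_inr, Function.Embedding.trans_apply,
    Fin.natAddEmb_apply, Fin.natAdd_mk, Fin.castLEEmb_apply, Fin.castLE_mk, Sum.inr.injEq,
    Fin.ext_iff]
  omega

lemma exists_bipartiteWindow_of_adj (hm : 0 < m) (hmn : m ≤ n)
    {G : SimpleGraph (Fin m ⊕ Fin n)} (hA : ∀ a a', ¬ G.Adj (Sum.inl a) (Sum.inl a'))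
    (hB : ∀ b b', ¬ G.Adj (Sum.inr b) (Sum.inr b')) (x y : Fin m ⊕ Fin n) (hxy : G.Adj x y) :
    ∃ j ∈ Finset.range (n / m + 1),
      x ∈ Set.range (bipartiteWindow hmn j) ∧ y ∈ Set.range (bipartiteWindow hmn j) := by
  have hj (b : Fin n) : (b : ℕ) / m ∈ Finset.range (n / m + 1) :=
    Finset.mem_range_succ_iff.mpr (Nat.div_le_div_right b.isLt.le)
  rcases x with a | b <;> rcases y with a' | b'
  · exact absurd hxy (hA a a')
  · exact ⟨_, hj b', inl_mem_range_bipartiteWindow hmn _ a,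
      inr_mem_range_bipartiteWindow hm hmn b'⟩
  · exact ⟨_, hj b, inr_mem_range_bipartiteWindow hm hmn b,
      inl_mem_range_bipartiteWindow hmn _ a'⟩
  · exact absurd hxy (hB b b')

lemma card_bipartiteWindows_mul_le (hmn : m ≤ n) : (n / m + 1) * m ≤ 2 * n := by
  have := Nat.div_mul_le_self n m
  rw [Nat.add_mul]
  omega

end BipartiteWindow

lemma mul_rpow_bound {t m n C α : ℝ} (hC : 0 ≤ C) (hm : 0 < m) (htm : t * m ≤ 2 * n) :
    t * (C * (2 * m) ^ (1 + α)) ≤ 2 ^ (2 + α) * C * m ^ α * n := by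
  have hsplit : t * (C * (2 * m) ^ (1 + α)) = t * m * (C * 2 ^ (1 + α) * m ^ α) := by
    rw [Real.mul_rpow zero_le_two hm.le, Real.rpow_add hm, Real.rpow_one]
    ring
  have htwo : (2 : ℝ) ^ (2 + α) = 2 * 2 ^ (1 + α) := by
    rw [show (2 : ℝ) + α = 1 + (1 + α) by ring, Real.rpow_add two_pos, Real.rpow_one]
  rw [hsplit, htwo]
  calc t * m * (C * 2 ^ (1 + α) * m ^ α) ≤ 2 * n * (C * 2 ^ (1 + α) * m ^ α) := by
        gcongr
    _ = 2 * 2 ^ (1 + α) * C * m ^ α * n := by ring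

theorem stmt_13_general {ι : Type*} {β : ι → Type*} (F : ∀ i, SimpleGraph (β i))
    (C α : ℝ) (hC : 0 < C) (N₀ : ℕ)
    (hex : ∀ k : ℕ, N₀ ≤ k → ∀ G : SimpleGraph (Fin k),
      (∀ i, ¬ ContainsCopy (F i) G) → (G.edgeSet.ncard : ℝ) ≤ C * (k : ℝ) ^ (1 + α)) :
    ∃ M : ℕ, ∀ m n : ℕ, N₀ ≤ m → M ≤ m → m ≤ n →
      ∀ G : SimpleGraph (Fin m ⊕ Fin n),
        (∀ a a', ¬ G.Adj (Sum.inl a) (Sum.inl a')) →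
        (∀ b b', ¬ G.Adj (Sum.inr b) (Sum.inr b')) →
        (∀ i, ¬ ContainsCopy (F i) G) →
        (G.edgeSet.ncard : ℝ) ≤ (2 : ℝ) ^ ((2 : ℝ) + α) * C * (m : ℝ) ^ α * (n : ℝ) := by
  refine ⟨1, fun m n hN₀ hm hmn G hA hB hF => ?_⟩
  set w := bipartiteWindow hmn
  have hblock (j : ℕ) : ((G.comap (w j)).edgeSet.ncard : ℝ) ≤ C * (2 * m : ℝ) ^ (1 + α) := by
    simpa only [Nat.cast_add, two_mul] using
      hex (m + m) (by omega) (G.comap (w j)) fun i h => hF i (h.of_comap _)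
  have hcount : ((n / m + 1 : ℕ) : ℝ) * m ≤ 2 * n := by
    exact_mod_cast card_bipartiteWindows_mul_le hmn
  calc (G.edgeSet.ncard : ℝ)
      ≤ ∑ j ∈ Finset.range (n / m + 1), ((G.comap (w j)).edgeSet.ncard : ℝ) := by
        exact_mod_cast
          G.ncard_edgeSet_le_sum_comap _ w (exists_bipartiteWindow_of_adj hm hmn hA hB)
    _ ≤ ∑ _j ∈ Finset.range (n / m + 1), C * (2 * m : ℝ) ^ (1 + α) :=
        Finset.sum_le_sum fun j _ => hblock j
    _ = ((n / m + 1 : ℕ) : ℝ) * (C * (2 * m : ℝ) ^ (1 + α)) := by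
        rw [Finset.sum_const, Finset.card_range, nsmul_eq_mul]
    _ ≤ _ := mul_rpow_bound hC.le (by exact_mod_cast hm) hcount

/-- Semibipartite Turán bound: if `ex(k,F) ≤ C·k^{1+α}` for all `k ≥ N₀` (with `C > 0`,
`α ∈ (0,1)`), then there is a constant `M` such that for all `n ≥ m ≥ max(N₀, M)` every
`F`-free bipartite graph with parts of sizes `m` and `n` has at most `2^{2+α}·C·m^α·n`
edges. -/
theorem stmt_13 {ι : Type*} {β : ι → Type*} (F : ∀ i, SimpleGraph (β i))
    (C α : ℝ) (hC : 0 < C) (hα : α ∈ Set.Ioo (0 : ℝ) 1) (N₀ : ℕ)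
    (hex : ∀ k : ℕ, N₀ ≤ k → ∀ G : SimpleGraph (Fin k),
      (∀ i, ¬ ContainsCopy (F i) G) → (G.edgeSet.ncard : ℝ) ≤ C * (k : ℝ) ^ (1 + α)) :
    ∃ M : ℕ, ∀ m n : ℕ, N₀ ≤ m → M ≤ m → m ≤ n →
      ∀ G : SimpleGraph (Fin m ⊕ Fin n),
        (∀ a a', ¬ G.Adj (Sum.inl a) (Sum.inl a')) →
        (∀ b b', ¬ G.Adj (Sum.inr b) (Sum.inr b')) →
        (∀ i, ¬ ContainsCopy (F i) G) →
        (G.edgeSet.ncard : ℝ) ≤ (2 : ℝ) ^ ((2 : ℝ) + α) * C * (m : ℝ) ^ α * (n : ℝ) :=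
  stmt_13_general F C α hC N₀ hex
end

section
/- Let s ≥ 1 and let F be a bipartite graph with parts W₁, W₂ such that every vertex in W₂ has degree at most s in F. Let t = |W₂| and C = 2(|V(F)|^s/s! + |V(F)|). Then for n sufficiently large, every bipartite graph G with parts V₁, V₂ of size n each satisfying Σ_{v∈V₁} d(v)^s ≥ (C/2)·n^s contains a set X' ⊆ V₁ with |X'| ≥ t such that every s-subset of X' has at least t common neighbors in V₂; consequently G contains a copy of F. -/
open Finset

section CommonNeighbors

variable {ι κ : Type*}

def commonNeighborFinset [Fintype κ] (r : ι → κ → Prop) [∀ a b, Decidable (r a b)]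
    (T : Finset ι) : Finset κ :=
  {b | ∀ a ∈ T, r a b}

variable [Fintype κ] {r : ι → κ → Prop} [∀ a b, Decidable (r a b)]

theorem mem_commonNeighborFinset {T : Finset ι} {b : κ} :
    b ∈ commonNeighborFinset r T ↔ ∀ a ∈ T, r a b := by
  simp [commonNeighborFinset]

theorem commonNeighborFinset_anti : Antitone (commonNeighborFinset r) := fun _ _ hST _ hb =>
  mem_commonNeighborFinset.2 fun a ha => mem_commonNeighborFinset.1 hb a (hST ha)

theorem le_card_commonNeighborFinset_of_card_le {X T : Finset ι} {a t : ℕ}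
    (hX : ∀ T ⊆ X, #T = a → t ≤ #(commonNeighborFinset r T)) (haX : a ≤ #X) (hTX : T ⊆ X)
    (hT : #T ≤ a) : t ≤ #(commonNeighborFinset r T) := by
  obtain ⟨T', hTT', hT'X, hT'⟩ := exists_subsuperset_card_eq hTX hT haX
  exact (hX T' hT'X hT').trans (card_le_card (commonNeighborFinset_anti hTT'))

end CommonNeighbors

theorem exists_subset_card_le_add_forall_not_subset {ι : Type*} [DecidableEq ι]
    (𝓑 : Finset (Finset ι)) (h𝓑 : ∀ T ∈ 𝓑, T.Nonempty) (X : Finset ι) :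
    ∃ Y ⊆ X, #X ≤ #Y + #{T ∈ 𝓑 | T ⊆ X} ∧ ∀ T ∈ 𝓑, ¬ T ⊆ Y := by
  induction 𝓑 using Finset.induction_on with
  | empty => exact ⟨X, subset_rfl, by simp, by simp⟩
  | insert T 𝓑 hT ih =>
    obtain ⟨Y, hYX, hcard, hY⟩ := ih fun T' hT' => h𝓑 T' (mem_insert_of_mem hT')
    by_cases hTY : T ⊆ Y
    · obtain ⟨x, hx⟩ := h𝓑 T (mem_insert_self T 𝓑)
      refine ⟨Y.erase x, (erase_subset x Y).trans hYX, ?_, ?_⟩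
      · rw [filter_insert, if_pos (hTY.trans hYX), card_insert_of_notMem (by simp [hT]),
          card_erase_of_mem (hTY hx)]
        have : 0 < #Y := card_pos.2 ⟨x, hTY hx⟩
        omega
      · intro T' hT' hT'Y
        rcases mem_insert.1 hT' with rfl | hT'
        · exact notMem_erase x Y (hT'Y hx)
        · exact hY T' hT' (hT'Y.trans (erase_subset x Y))
    · refine ⟨Y, hYX, hcard.trans ?_, ?_⟩
      · gcongr
        exact subset_insert T 𝓑
      · intro T' hT'
        rcases mem_insert.1 hT' with rfl | hT'
        · exact hTY
        · exact hY T' hT'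

section DependentRandomChoice

variable {ι κ : Type*} [Fintype κ] [DecidableEq κ]

theorem card_filter_forall_apply_mem_eq_pow (s : ℕ) (M : Finset κ) :
    #{u : Fin s → κ | ∀ i, u i ∈ M} = #M ^ s := by
  rw [← Fintype.card_piFinset_const]
  congr 1
  ext u
  simp [Fintype.mem_piFinset]

theorem sum_card_filter_forall_eq_sum_pow {β : Type*} (B : Finset β) (P : β → κ → Prop)
    [∀ b c, Decidable (P b c)] (s : ℕ) :
    ∑ u : Fin s → κ, #{b ∈ B | ∀ i, P b (u i)} = ∑ b ∈ B, #{c | P b c} ^ s := by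
  calc ∑ u : Fin s → κ, #{b ∈ B | ∀ i, P b (u i)}
      = ∑ b ∈ B, #{u : Fin s → κ | ∀ i, P b (u i)} := by
        simp only [card_filter]
        exact sum_comm
    _ = ∑ b ∈ B, #{c | P b c} ^ s := sum_congr rfl fun b _ => by
        rw [← card_filter_forall_apply_mem_eq_pow]
        simp

theorem exists_forall_not_subset_sum_card_pow_le [Fintype ι] [DecidableEq ι] (r : ι → κ → Prop)
    [∀ a b, Decidable (r a b)] (s : ℕ) (𝓑 : Finset (Finset ι)) (h𝓑 : ∀ T ∈ 𝓑, T.Nonempty) :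
    ∃ Y : Finset ι, (∀ T ∈ 𝓑, ¬ T ⊆ Y) ∧
      ∑ a, #{b | r a b} ^ s ≤
        #Y * Fintype.card κ ^ s + ∑ T ∈ 𝓑, #(commonNeighborFinset r T) ^ s := by
  have hsum_X := sum_card_filter_forall_eq_sum_pow univ r s
  have hsum_𝓑 := sum_card_filter_forall_eq_sum_pow 𝓑
    (fun (T : Finset ι) (b : κ) => b ∈ commonNeighborFinset r T) s
  have hdel (u : Fin s → κ) : ∃ Y : Finset ι, (∀ T ∈ 𝓑, ¬ T ⊆ Y) ∧
      #{a | ∀ i, r a (u i)} ≤ #Y + #{T ∈ 𝓑 | ∀ i, u i ∈ commonNeighborFinset r T} := by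
    obtain ⟨Y, -, hcard, hY⟩ :=
      exists_subset_card_le_add_forall_not_subset 𝓑 h𝓑 {a | ∀ i, r a (u i)}
    refine ⟨Y, hY, hcard.trans_eq ?_⟩
    congr 2
    ext T
    simp only [subset_iff, mem_filter, mem_univ, true_and, mem_commonNeighborFinset]
    exact and_congr_right fun _ => ⟨fun h i a ha => h ha i, fun h a ha i => h i a ha⟩
  choose Y hY using hdel
  rcases isEmpty_or_nonempty (Fin s → κ) with hempty | hnonempty
  · refine ⟨∅, fun T hT => by simpa using (h𝓑 T hT).ne_empty, ?_⟩
    rw [← hsum_X, Fintype.sum_empty]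
    exact Nat.zero_le _
  · obtain ⟨u₀, -, hmax⟩ := exists_max_image univ (fun u => #(Y u)) univ_nonempty
    refine ⟨Y u₀, (hY u₀).1, ?_⟩
    calc ∑ a, #{b | r a b} ^ s
        = ∑ u : Fin s → κ, #{a | ∀ i, r a (u i)} := by simpa using hsum_X.symm
      _ ≤ ∑ u : Fin s → κ, (#(Y u₀) + #{T ∈ 𝓑 | ∀ i, u i ∈ commonNeighborFinset r T}) :=
        sum_le_sum fun u _ => (hY u).2.trans (add_le_add_left (hmax u (mem_univ u)) _)
      _ = #(Y u₀) * Fintype.card κ ^ s + ∑ T ∈ 𝓑, #(commonNeighborFinset r T) ^ s := by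
        rw [sum_add_distrib, hsum_𝓑]
        simp [mul_comm]

end DependentRandomChoice

theorem le_of_mul_pow_le_add_choose_mul_pow {s n A k : ℕ} (hs : 1 ≤ s) (hn : A ^ s < n)
    (h : ((A : ℝ) ^ s / (Nat.factorial s : ℝ) + A) * (n : ℝ) ^ s ≤
      k * (n : ℝ) ^ s + ((n.choose s : ℝ) + (n : ℝ) ^ (s - 1)) * (A : ℝ) ^ s) :
    A ≤ k := by
  have hn_pos : (0 : ℝ) < n := by exact_mod_cast (Nat.zero_le _).trans_lt hn
  have hchoose : (n.choose s : ℝ) * (A : ℝ) ^ s ≤ (n : ℝ) ^ s / (Nat.factorial s : ℝ) * A ^ s :=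
    mul_le_mul_of_nonneg_right (Nat.choose_le_pow_div s n) (by positivity)
  have hsmall : (n : ℝ) ^ (s - 1) * (A : ℝ) ^ s < (n : ℝ) ^ s := by
    calc (n : ℝ) ^ (s - 1) * (A : ℝ) ^ s < (n : ℝ) ^ (s - 1) * n := by
          gcongr
          exact_mod_cast hn
      _ = (n : ℝ) ^ s := by rw [← pow_succ, Nat.sub_add_cancel hs]
  have hlt : (A : ℝ) * (n : ℝ) ^ s < (k + 1) * (n : ℝ) ^ s := by
    have : (A : ℝ) ^ s / (Nat.factorial s : ℝ) * (n : ℝ) ^ s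
        = (n : ℝ) ^ s / (Nat.factorial s : ℝ) * A ^ s := by ring
    nlinarith
  have : (A : ℝ) < k + 1 := lt_of_mul_lt_mul_right hlt (by positivity)
  exact_mod_cast Nat.lt_succ_iff.1 (by exact_mod_cast this)

theorem card_powersetCard_union_le {n s a : ℕ} (hn : 0 < n) (has : a ≤ s) :
    #((univ : Finset (Fin n)).powersetCard s ∪ univ.powersetCard a) ≤
      n.choose s + n ^ (s - 1) := by
  rcases has.eq_or_lt with rfl | has
  · simp
  · calc _ ≤ #((univ : Finset (Fin n)).powersetCard s) + #(univ.powersetCard a) :=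
          card_union_le _ _
      _ = n.choose s + n.choose a := by simp
      _ ≤ n.choose s + n ^ (s - 1) := by
          gcongr
          exact (Nat.choose_le_pow n a).trans (Nat.pow_le_pow_right hn (by omega))

/-- Both sizes `s` and `a` are kept good because `X` may have fewer than `s` elements, in which
case the condition on `s`-subsets is vacuous. -/
theorem exists_card_le_forall_le_card_commonNeighborFinset {n s a t A : ℕ}
    (r : Fin n → Fin n → Prop) [∀ a b, Decidable (r a b)] (hs : 1 ≤ s) (has : a ≤ s)
    (htA : t ≤ A) (hn : A ^ s < n)
    (hdeg : ((A : ℝ) ^ s / (Nat.factorial s : ℝ) + A) * (n : ℝ) ^ s ≤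
      ∑ x, (#{b | r x b} : ℝ) ^ s) :
    ∃ X : Finset (Fin n), A ≤ #X ∧
      ∀ T ⊆ X, (#T = s ∨ #T = a) → t ≤ #(commonNeighborFinset r T) := by
  set 𝓑 := {T ∈ (univ : Finset (Fin n)).powersetCard s ∪ univ.powersetCard a |
    #(commonNeighborFinset r T) < t}
  have h𝓑 : ∀ T ∈ 𝓑, T.Nonempty := by
    intro T hT
    rw [nonempty_iff_ne_empty]
    rintro rfl
    have : #(commonNeighborFinset r (∅ : Finset (Fin n))) = n := by
      simp [commonNeighborFinset]
    have := (mem_filter.1 hT).2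
    have := Nat.le_self_pow (by omega : s ≠ 0) A
    omega
  obtain ⟨X, hX𝓑, hsum⟩ := exists_forall_not_subset_sum_card_pow_le r s 𝓑 h𝓑
  refine ⟨X, ?_, fun T hTX hT => ?_⟩
  · have hbad : ∑ T ∈ 𝓑, #(commonNeighborFinset r T) ^ s ≤
        (n.choose s + n ^ (s - 1)) * A ^ s :=
      calc ∑ T ∈ 𝓑, #(commonNeighborFinset r T) ^ s ≤ ∑ _T ∈ 𝓑, A ^ s :=
            sum_le_sum fun T hT => Nat.pow_le_pow_left (((mem_filter.1 hT).2).le.trans htA) s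
        _ ≤ (n.choose s + n ^ (s - 1)) * A ^ s := by
            rw [sum_const, smul_eq_mul]
            gcongr
            exact (card_filter_le _ _).trans
              (card_powersetCard_union_le ((Nat.zero_le _).trans_lt hn) has)
    refine le_of_mul_pow_le_add_choose_mul_pow hs hn (hdeg.trans ?_)
    have := hsum.trans (Nat.add_le_add_left hbad _)
    rw [Fintype.card_fin] at this
    exact_mod_cast this
  · by_contra hlt
    refine hX𝓑 T (mem_filter.2 ⟨?_, not_le.1 hlt⟩) hTX
    rcases hT with hT | hT <;> simp [hT]

theorem exists_embedding_forall_mem_of_card_le {β κ : Type*} [Fintype β] [DecidableEq κ]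
    (S : β → Finset κ) (hS : ∀ v, Fintype.card β ≤ #(S v)) :
    ∃ f : β ↪ κ, ∀ v, f v ∈ S v := by
  obtain ⟨f, hf, hfS⟩ := (all_card_le_biUnion_card_iff_exists_injective S).1 fun U => by
    rcases U.eq_empty_or_nonempty with rfl | ⟨v, hv⟩
    · simp
    · exact (card_le_univ U).trans ((hS v).trans (card_le_card (subset_biUnion_of_mem S hv)))
  exact ⟨⟨f, hf⟩, hfS⟩

theorem containsCopy_of_embedding_sum {α ι κ : Type*} (F : SimpleGraph α) (W : Finset α)
    (hbip : ∀ u v, F.Adj u v → (u ∈ W ↔ v ∉ W)) (G : SimpleGraph (ι ⊕ κ))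
    (g : {w // w ∉ W} ↪ ι) (h : {v // v ∈ W} ↪ κ)
    (hadj : ∀ v w, F.Adj v.1 w.1 → G.Adj (.inl (g w)) (.inr (h v))) : ContainsCopy F G := by
  classical
  refine ⟨(Equiv.sumCompl (· ∈ W)).symm.toEmbedding.trans
    ((h.sumMap g).trans (Equiv.sumComm _ _).toEmbedding), fun u v huv => ?_⟩
  by_cases hu : u ∈ W
  · have hv : v ∉ W := (hbip u v huv).1 hu
    simpa [hu, hv] using (hadj ⟨u, hu⟩ ⟨v, hv⟩ huv).symm
  · have hv : v ∈ W := by simpa [hu] using hbip u v huv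
    simpa [hu, hv] using hadj ⟨v, hv⟩ ⟨u, hu⟩ huv.symm

theorem card_neighborFinset_inl {ι κ : Type*} [Fintype ι] [Fintype κ]
    (G : SimpleGraph (ι ⊕ κ)) [DecidableRel G.Adj] (hG : ∀ a a', ¬ G.Adj (.inl a) (.inl a'))
    (a : ι) : #(G.neighborFinset (.inl a)) = #{b | G.Adj (.inl a) (.inr b)} := by
  have : G.neighborFinset (.inl a) = (univ.filter fun b => G.Adj (.inl a) (.inr b)).map .inr := by
    ext (b | b) <;> simp [hG]
  rw [this, card_map]

theorem stmt_15_general {α : Type*} [Fintype α]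
    (s : ℕ) (hs : 1 ≤ s) (F : SimpleGraph α) [DecidableRel F.Adj]
    (W₂ : Finset α)
    (hbip : ∀ u v, F.Adj u v → (u ∈ W₂ ↔ v ∉ W₂))
    (hdeg : ∀ v ∈ W₂, F.degree v ≤ s) :
    ∃ n₀ : ℕ, ∀ n : ℕ, n₀ ≤ n →
      ∀ (G : SimpleGraph (Fin n ⊕ Fin n)) (_ : DecidableRel G.Adj),
        (∀ a a', ¬ G.Adj (Sum.inl a) (Sum.inl a')) →
        (∀ b b', ¬ G.Adj (Sum.inr b) (Sum.inr b')) →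
        (2 * ((Fintype.card α : ℝ) ^ s / (Nat.factorial s : ℝ) + (Fintype.card α : ℝ)) / 2)
            * (n : ℝ) ^ s ≤
          ∑ a : Fin n, ((G.neighborFinset (Sum.inl a)).card : ℝ) ^ s →
        (∃ X' : Finset (Fin n), W₂.card ≤ X'.card ∧
          ∀ T ⊆ X', T.card = s →
            W₂.card ≤ (Finset.univ.filter
              (fun b : Fin n => ∀ a ∈ T, G.Adj (Sum.inl a) (Sum.inr b))).card) ∧
        ContainsCopy F G := by
  classical
  set A := Fintype.card α
  refine ⟨A ^ s + 1, fun n hn G _ hV₁ _ hsum => ?_⟩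
  let r (x b : Fin n) : Prop := G.Adj (.inl x) (.inr b)
  have htA : #W₂ ≤ A := card_le_univ W₂
  obtain ⟨X, hXA, hX⟩ := exists_card_le_forall_le_card_commonNeighborFinset r hs
    (min_le_left s A) htA (by omega) (by simpa [card_neighborFinset_inl G hV₁] using hsum)
  refine ⟨⟨X, htA.trans hXA, fun T hTX hTs => ?_⟩, ?_⟩
  · simpa [commonNeighborFinset, r] using hX T hTX (.inl hTs)
  obtain ⟨g, hgX⟩ := exists_embedding_forall_mem_of_card_le (β := {w // w ∉ W₂}) (fun _ => X)
    fun _ => (Fintype.card_subtype_le _).trans hXA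
  let N (v : {v // v ∈ W₂}) : Finset (Fin n) := ((F.neighborFinset v).subtype (· ∉ W₂)).map g
  have hNX (v) : N v ⊆ X := fun x hx => by obtain ⟨w, -, rfl⟩ := mem_map.1 hx; exact hgX w
  have hN (v : {v // v ∈ W₂}) : #(N v) ≤ min s A := by
    rw [card_map, card_subtype]
    exact le_min ((card_filter_le _ _).trans ((F.card_neighborFinset_eq_degree v).trans_le
      (hdeg v v.2))) ((card_filter_le _ _).trans (card_le_univ _))
  obtain ⟨h, hh⟩ := exists_embedding_forall_mem_of_card_le (fun v => commonNeighborFinset r (N v))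
    fun v => (Fintype.card_coe W₂).trans_le <| le_card_commonNeighborFinset_of_card_le
      (fun T hTX hT => hX T hTX (.inr hT)) ((min_le_right _ _).trans hXA) (hNX v) (hN v)
  refine containsCopy_of_embedding_sum F W₂ hbip G g h fun v w hvw => ?_
  exact mem_commonNeighborFinset.1 (hh v) (g w) (mem_map_of_mem _ (by simpa using hvw))

/-- Dependent random choice: let `s ≥ 1` and let `F` be a bipartite graph with parts
`W₁, W₂` in which every vertex of `W₂` has degree at most `s`; set `t = |W₂|` and
`C = 2(|V(F)|^s/s! + |V(F)|)`.  For `n` sufficiently large, every bipartite graph `G`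
with parts `V₁, V₂` of size `n` satisfying `∑_{v∈V₁} d(v)^s ≥ (C/2)·n^s` contains a set
`X' ⊆ V₁` with `|X'| ≥ t` in which every `s`-subset has at least `t` common neighbors in
`V₂`; consequently `G` contains a copy of `F`. -/
theorem stmt_15 {α : Type*} [Fintype α] [DecidableEq α]
    (s : ℕ) (hs : 1 ≤ s) (F : SimpleGraph α) [DecidableRel F.Adj]
    (W₂ : Finset α)
    (hbip : ∀ u v, F.Adj u v → (u ∈ W₂ ↔ v ∉ W₂))
    (hdeg : ∀ v ∈ W₂, F.degree v ≤ s) :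
    ∃ n₀ : ℕ, ∀ n : ℕ, n₀ ≤ n →
      ∀ (G : SimpleGraph (Fin n ⊕ Fin n)) (_ : DecidableRel G.Adj),
        (∀ a a', ¬ G.Adj (Sum.inl a) (Sum.inl a')) →
        (∀ b b', ¬ G.Adj (Sum.inr b) (Sum.inr b')) →
        (2 * ((Fintype.card α : ℝ) ^ s / (Nat.factorial s : ℝ) + (Fintype.card α : ℝ)) / 2)
            * (n : ℝ) ^ s ≤
          ∑ a : Fin n, ((G.neighborFinset (Sum.inl a)).card : ℝ) ^ s →
        (∃ X' : Finset (Fin n), W₂.card ≤ X'.card ∧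
          ∀ T ⊆ X', T.card = s →
            W₂.card ≤ (Finset.univ.filter
              (fun b : Fin n => ∀ a ∈ T, G.Adj (Sum.inl a) (Sum.inr b))).card) ∧
        ContainsCopy F G :=
  stmt_15_general s hs F W₂ hbip hdeg
end

section
/- Let s ≥ 1 be an integer and let F be a bipartite graph with parts W₁, W₂ where every vertex of W₂ has degree at most s. Then for sufficiently large n, every n-vertex F-free graph G satisfies Σ_{v∈V(G)} d(v)^s ≤ 2(|V(F)|^s/s! + |V(F)|)·n^s. -/
/-! Call a nonempty set `S` of at most `s` vertices of `G` bad if it has fewer than `m = |V(F)|`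
common neighbours. If a vertex set `A` is larger than `m` plus the number of bad sets inside it,
deleting one vertex from each of them leaves at least `m` vertices any `s` of which have `m` common
neighbours; then `F` embeds greedily, `W₁` into these vertices and each vertex of `W₂` onto an
unused common neighbour of the images of its at most `s` neighbours. So in an `F`-free `G` every `A`
satisfies `|A| < m + #{bad S ⊆ A}`. Summing this over the common neighbourhoods `A` of all
`s`-tuples of vertices gives `∑ d(v)^s + n^s ≤ m n^s + m^s #bad` by double counting, and
`#bad ≤ s n^(s-1) + C(n, s)`, where `s n^(s-1) m^s ≤ n^s` once `n` is large. -/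

open Finset

theorem Finset.sum_card_filter_forall_eq_sum_card_pow {β γ : Type*} [Fintype β] (s : ℕ)
    (X : Finset γ) (P : β → γ → Prop) [∀ y x, Decidable (P y x)] :
    ∑ T : Fin s → β, #{x ∈ X | ∀ i, P (T i) x} = ∑ x ∈ X, #{y | P y x} ^ s := by
  classical
  calc ∑ T : Fin s → β, #{x ∈ X | ∀ i, P (T i) x}
      = ∑ x ∈ X, ∑ T : Fin s → β, if ∀ i, P (T i) x then 1 else 0 := by
        simp only [card_filter]
        exact sum_comm
    _ = ∑ x ∈ X, #{y | P y x} ^ s := by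
        refine sum_congr rfl fun x _ => ?_
        rw [← card_filter, ← Fintype.card_piFinset_const]
        congr 1
        ext T
        simp [Fintype.mem_piFinset]

theorem Finset.exists_card_le_forall_exists_mem {β : Type*} [DecidableEq β]
    (𝒮 : Finset (Finset β)) (h : ∀ S ∈ 𝒮, S.Nonempty) :
    ∃ H : Finset β, #H ≤ #𝒮 ∧ ∀ S ∈ 𝒮, ∃ x ∈ S, x ∈ H := by
  induction 𝒮 using Finset.induction_on with
  | empty => exact ⟨∅, by simp, by simp⟩
  | @insert S 𝒮 hS ih =>
    obtain ⟨H, hH, hHS⟩ := ih fun T hT => h T (mem_insert_of_mem hT)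
    obtain ⟨x, hx⟩ := h S (mem_insert_self S 𝒮)
    refine ⟨insert x H, (card_insert_le x H).trans (by rw [card_insert_of_notMem hS]; omega), ?_⟩
    simp only [forall_mem_insert]
    exact ⟨⟨x, hx, mem_insert_self x H⟩,
      fun T hT => (hHS T hT).imp fun y hy => ⟨hy.1, mem_insert_of_mem hy.2⟩⟩

theorem Function.Embedding.exists_update_eq {α β : Type*} (f : α ↪ β) {w : α} {y : β}
    (hy : ∀ a ≠ w, f a ≠ y) : ∃ g : α ↪ β, g w = y ∧ ∀ a ≠ w, g a = f a := by
  classical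
  refine ⟨f.setValue w y, setValue_eq f w y, fun a ha => ?_⟩
  simp [setValue, ha, hy a ha]

theorem Nat.sum_range_choose_le_mul_pow_add_choose {n : ℕ} (hn : 1 ≤ n) (s : ℕ) :
    ∑ t ∈ range (s + 1), n.choose t ≤ s * n ^ (s - 1) + n.choose s := by
  rw [sum_range_succ, add_le_add_iff_right]
  calc ∑ t ∈ range s, n.choose t ≤ ∑ _t ∈ range s, n ^ (s - 1) := sum_le_sum fun t ht =>
        (Nat.choose_le_pow n t).trans (Nat.pow_le_pow_right hn (by grind))
    _ = s * n ^ (s - 1) := by simp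

namespace SimpleGraph

variable {α β : Type*} [Fintype β] (G : SimpleGraph β) [DecidableRel G.Adj]

theorem ncard_neighborSet_eq_degree (v : β) : (G.neighborSet v).ncard = G.degree v := by
  rw [← Nat.card_coe_set_eq, Nat.card_eq_fintype_card, card_neighborSet_eq_degree]

def commonNeighborFinset (S : Finset β) : Finset β := {v | ∀ u ∈ S, G.Adj u v}

def badSets (m s : ℕ) : Finset (Finset β) :=
  {S | S.Nonempty ∧ #S ≤ s ∧ #(G.commonNeighborFinset S) < m}

theorem card_badSets_le (m s : ℕ) :
    #(G.badSets m s) ≤ ∑ t ∈ range (s + 1), (Fintype.card β).choose t := by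
  classical
  calc #(G.badSets m s)
      ≤ #((range (s + 1)).biUnion fun t => powersetCard t (univ : Finset β)) := by
        refine card_le_card fun S hS => ?_
        simp only [badSets, mem_filter] at hS
        simpa [Nat.lt_succ_iff] using hS.2.2.1
    _ ≤ _ := card_biUnion_le.trans_eq <| by simp [card_powersetCard]

variable [Fintype α] {F : SimpleGraph α} [DecidableRel F.Adj] {W : Finset α} {s : ℕ}
  {A : Finset β}

section Embedding

variable (hbip : ∀ u v, F.Adj u v → (u ∈ W ↔ v ∉ W)) (hdeg : ∀ v ∈ W, F.degree v ≤ s)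
  (hA : Fintype.card α ≤ #A)
  (hcommon : ∀ S ⊆ A, #S ≤ s → Fintype.card α ≤ #(G.commonNeighborFinset S))
include hbip hdeg hA hcommon

theorem exists_embedding_adj_of_subset (U : Finset α) (hU : U ⊆ W) :
    ∃ f : α ↪ β, (∀ a ∉ W, f a ∈ A) ∧ ∀ w ∈ U, ∀ u, F.Adj u w → G.Adj (f u) (f w) := by
  classical
  induction U using Finset.induction_on with
  | empty =>
    obtain ⟨f⟩ : Nonempty (α ↪ A) := Function.Embedding.nonempty_of_card_le (by simpa using hA)
    exact ⟨f.trans (Function.Embedding.subtype _), fun a _ => (f a).2, by simp⟩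
  | @insert w U hwU ih =>
    have hw : w ∈ W := hU (mem_insert_self w U)
    obtain ⟨f, hfA, hfU⟩ := ih ((subset_insert w U).trans hU)
    have hnbr : ∀ w ∈ W, ∀ u, F.Adj u w → u ∉ W := fun w hw u huw => by
      simpa [hw] using hbip w u huw.symm
    set S := (F.neighborFinset w).image f
    have hSA : S ⊆ A := by
      simp only [S, image_subset_iff, mem_neighborFinset]
      exact fun u hu => hfA u (hnbr w hw u hu.symm)
    have hS : #S ≤ s := card_image_le.trans (hdeg w hw)
    have hused : #((univ.erase w).map f) < Fintype.card α := by
      simpa using card_pos.2 ⟨w, mem_univ w⟩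
    obtain ⟨y, hyS, hyused⟩ := exists_mem_notMem_of_card_lt_card <|
      hused.trans_le (hcommon S hSA hS)
    obtain ⟨g, hgw, hg⟩ := f.exists_update_eq (y := y) fun a ha hay =>
      hyused (hay ▸ mem_map_of_mem f (mem_erase.2 ⟨ha, mem_univ a⟩))
    refine ⟨g, fun a ha => ?_, fun w' hw' u hu => ?_⟩
    · rw [hg a fun h => ha (h ▸ hw)]
      exact hfA a ha
    · have hu' : u ≠ w := fun h => hnbr w' (hU hw') u hu (h ▸ hw)
      rw [hg u hu']
      rcases mem_insert.1 hw' with rfl | hw'U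
      · rw [hgw]
        simp only [commonNeighborFinset, mem_filter, mem_univ, true_and] at hyS
        exact hyS _ (mem_image_of_mem f (mem_neighborFinset _ _ _ |>.2 hu.symm))
      · rw [hg w' (by rintro rfl; exact hwU hw'U)]
        exact hfU w' hw'U u hu

theorem containsCopy_of_forall_le_card_commonNeighborFinset : ContainsCopy F G := by
  obtain ⟨f, -, hf⟩ := exists_embedding_adj_of_subset G hbip hdeg hA hcommon W subset_rfl
  refine ⟨f, fun a b hab => ?_⟩
  by_cases hb : b ∈ W
  · exact hf b hb a hab
  · exact (hf a (by simpa [hb] using hbip a b hab) b hab.symm).symm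

end Embedding

theorem card_lt_add_card_filter_badSets_subset [DecidableEq β]
    (hbip : ∀ u v, F.Adj u v → (u ∈ W ↔ v ∉ W)) (hdeg : ∀ v ∈ W, F.degree v ≤ s)
    (hF : ¬ContainsCopy F G) (A : Finset β) :
    #A < Fintype.card α + #{S ∈ G.badSets (Fintype.card α) s | S ⊆ A} := by
  set ℬ := {S ∈ G.badSets (Fintype.card α) s | S ⊆ A}
  by_contra! hA
  obtain ⟨H, hH, hHℬ⟩ := exists_card_le_forall_exists_mem ℬ fun S hS =>
    (mem_filter.1 (mem_filter.1 hS).1).2.1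
  have hAH := le_card_sdiff H A
  refine hF <| containsCopy_of_forall_le_card_commonNeighborFinset G hbip hdeg
    (A := A \ H) (by omega) fun S hSA hS => ?_
  by_contra! hlt
  rcases S.eq_empty_or_nonempty with rfl | hne
  · have : #(A \ H) ≤ #(G.commonNeighborFinset ∅) :=
      card_le_card fun v _ => by simp [commonNeighborFinset]
    omega
  have hSℬ : S ∈ ℬ := by
    simp only [ℬ, badSets, mem_filter, mem_univ, true_and]
    exact ⟨⟨hne, hS, hlt⟩, hSA.trans sdiff_subset⟩
  obtain ⟨x, hxS, hxH⟩ := hHℬ S hSℬ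
  exact (mem_sdiff.1 (hSA hxS)).2 hxH

theorem sum_degree_pow_add_le
    (hbip : ∀ u v, F.Adj u v → (u ∈ W ↔ v ∉ W)) (hdeg : ∀ v ∈ W, F.degree v ≤ s)
    (hF : ¬ContainsCopy F G) :
    ∑ v, G.degree v ^ s + Fintype.card β ^ s ≤
      Fintype.card α * Fintype.card β ^ s +
        #(G.badSets (Fintype.card α) s) * Fintype.card α ^ s := by
  classical
  set m := Fintype.card α
  set ℬ := G.badSets m s
  let N : (Fin s → β) → Finset β := fun T => {v | ∀ i, G.Adj (T i) v}
  have hN : ∑ T, #(N T) = ∑ v, G.degree v ^ s := by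
    rw [sum_card_filter_forall_eq_sum_card_pow]
    simp [← card_neighborFinset_eq_degree, neighborFinset_eq_filter, G.adj_comm]
  have hℬ : ∑ T, #{S ∈ ℬ | S ⊆ N T} ≤ #ℬ * m ^ s := calc
    ∑ T, #{S ∈ ℬ | S ⊆ N T} = ∑ S ∈ ℬ, #(G.commonNeighborFinset S) ^ s := by
      refine .trans ?_ <| (sum_card_filter_forall_eq_sum_card_pow s ℬ
        fun y S => ∀ u ∈ S, G.Adj y u).trans ?_
      · refine sum_congr rfl fun T _ => congrArg card <| filter_congr fun S _ => ?_
        simp only [N, subset_iff, mem_filter, mem_univ, true_and]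
        exact ⟨fun h i u hu => h hu i, fun h u hu i => h i u hu⟩
      · simp [commonNeighborFinset, G.adj_comm]
    _ ≤ ∑ S ∈ ℬ, m ^ s := sum_le_sum fun S hS =>
      Nat.pow_le_pow_left (mem_filter.1 hS).2.2.2.le s
    _ = #ℬ * m ^ s := by rw [sum_const, smul_eq_mul]
  have hT : ∑ T, (#(N T) + 1) ≤ ∑ T, (m + #{S ∈ ℬ | S ⊆ N T}) :=
    sum_le_sum fun T _ => card_lt_add_card_filter_badSets_subset G hbip hdeg hF (N T)
  simp only [sum_add_distrib, sum_const, card_univ, Fintype.card_fun, Fintype.card_fin,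
    smul_eq_mul] at hT
  linarith

theorem sum_degree_pow_le
    (hbip : ∀ u v, F.Adj u v → (u ∈ W ↔ v ∉ W)) (hdeg : ∀ v ∈ W, F.degree v ≤ s)
    (hF : ¬ContainsCopy F G) (hn : s * Fintype.card α ^ s < Fintype.card β) :
    ∑ v, G.degree v ^ s ≤
      Fintype.card α * Fintype.card β ^ s + (Fintype.card β).choose s * Fintype.card α ^ s := by
  set m := Fintype.card α
  set n := Fintype.card β
  have hdegs := sum_degree_pow_add_le G hbip hdeg hF
  have hbad := (card_badSets_le G m s).trans
    (Nat.sum_range_choose_le_mul_pow_add_choose (by omega) s)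
  have hsmall : s * m ^ s * n ^ (s - 1) ≤ n ^ s := by
    rcases s with _ | s
    · simp
    · simpa [pow_succ', mul_comm] using Nat.mul_le_mul_right (n ^ s) hn.le
  have := Nat.mul_le_mul_right (m ^ s) hbad
  linarith

end SimpleGraph

open SimpleGraph in
theorem stmt_16_general {α : Type*} [Fintype α]
    (s : ℕ) (F : SimpleGraph α) [DecidableRel F.Adj]
    (W₂ : Finset α)
    (hbip : ∀ u v, F.Adj u v → (u ∈ W₂ ↔ v ∉ W₂))
    (hdeg : ∀ v ∈ W₂, F.degree v ≤ s) :
    ∃ n₀ : ℕ, ∀ n : ℕ, n₀ ≤ n →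
      ∀ G : SimpleGraph (Fin n), ¬ ContainsCopy F G →
        ∑ v, ((G.neighborSet v).ncard : ℝ) ^ s ≤
          2 * ((Fintype.card α : ℝ) ^ s / (Nat.factorial s : ℝ) + (Fintype.card α : ℝ))
            * (n : ℝ) ^ s := by
  classical
  set m := Fintype.card α
  refine ⟨s * m ^ s + 1, fun n hn G hF => ?_⟩
  have hnat := sum_degree_pow_le G hbip hdeg hF (by simpa using hn)
  simp only [Fintype.card_fin] at hnat
  have : (0 : ℝ) ≤ ((m : ℝ) ^ s / s.factorial + m) * n ^ s := by positivity
  simp only [ncard_neighborSet_eq_degree]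
  calc (∑ v, G.degree v ^ s : ℝ) ≤ m * n ^ s + n.choose s * m ^ s := by exact_mod_cast hnat
    _ ≤ m * n ^ s + n ^ s / s.factorial * m ^ s := by gcongr; exact Nat.choose_le_pow_div s n
    _ = ((m : ℝ) ^ s / s.factorial + m) * n ^ s := by ring
    _ ≤ _ := by linarith

/-- Let `s ≥ 1` and let `F` be a bipartite graph with parts `W₁, W₂` in which every vertex
of `W₂` has degree at most `s`.  For `n` sufficiently large, every `n`-vertex `F`-free
graph `G` satisfies `∑_v d(v)^s ≤ 2(|V(F)|^s/s! + |V(F)|)·n^s`. -/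
theorem stmt_16 {α : Type*} [Fintype α] [DecidableEq α]
    (s : ℕ) (hs : 1 ≤ s) (F : SimpleGraph α) [DecidableRel F.Adj]
    (W₂ : Finset α)
    (hbip : ∀ u v, F.Adj u v → (u ∈ W₂ ↔ v ∉ W₂))
    (hdeg : ∀ v ∈ W₂, F.degree v ≤ s) :
    ∃ n₀ : ℕ, ∀ n : ℕ, n₀ ≤ n →
      ∀ G : SimpleGraph (Fin n), ¬ ContainsCopy F G →
        ∑ v, ((G.neighborSet v).ncard : ℝ) ^ s ≤
          2 * ((Fintype.card α : ℝ) ^ s / (Nat.factorial s : ℝ) + (Fintype.card α : ℝ))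
            * (n : ℝ) ^ s :=
  stmt_16_general s F W₂ hbip hdeg
end

section
/- If a bipartite graph H contains two distinct paths of length ℓ with the same pair of endpoints, then H contains a cycle of length 2i for some i with 2 ≤ i ≤ ℓ. -/
lemma SimpleGraph.Walk.IsCycle.exists_length_eq_two_mul {V : Type*} {H : SimpleGraph V}
    (hbip : H.Colorable 2) {w : V} {c : H.Walk w w} (hc : c.IsCycle) :
    ∃ i, 2 ≤ i ∧ c.length = 2 * i := by
  obtain ⟨i, hi⟩ := two_colorable_iff_forall_loop_even.mp hbip w c
  have hthree := hc.three_le_length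
  exact ⟨i, by omega, by omega⟩

/-- If a bipartite graph `H` contains two distinct paths of length `ℓ` with the same pair
of endpoints, then `H` contains a cycle of length `2i` for some `2 ≤ i ≤ ℓ`. -/
theorem stmt_19 {V : Type*} (H : SimpleGraph V) (hbip : H.Colorable 2)
    (l : ℕ) {u v : V} (p q : H.Walk u v) (hp : p.IsPath) (hq : q.IsPath)
    (hpl : p.length = l) (hql : q.length = l) (hne : p ≠ q) :
    ∃ i : ℕ, 2 ≤ i ∧ i ≤ l ∧
      ∃ (w : V) (c : H.Walk w w), c.IsCycle ∧ c.length = 2 * i := by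
  obtain ⟨w, -, -, c, hc, hlen⟩ := hp.exists_isCycle_length_le_add_of_ne hq hne
  obtain ⟨i, hi, hci⟩ := hc.exists_length_eq_two_mul hbip
  exact ⟨i, hi, by omega, w, c, hc, hci⟩
end
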